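/- arXiv:1105.2867 — 5 statements merged into one kernel-verified Lean document; each statement's English description precedes it below -/
import Mathlib

section
/- Let G be an abelian group and let i₀, i₁ : (ℕ → G) → (ℕ → G) be defined by i₀(u)(0) = u(0), i₀(u)(m) = u(2m) + u(2m-1) for m ≥ 1, and i₁(u)(m) = u(2m) + u(2m+1) for all m ≥ 0 (indexing from 0). Then for any v, w : ℕ → G there exists u : ℕ → G with i₀(u) = v and i₁(u) = w; in particular the map u ↦ (i₀(u), i₁(u)) is surjective onto (ℕ → G) × (ℕ → G). -/
/-- The maps `i₀`, `i₁` from the Mayer–Vietoris argument for the snake cone. -/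
def snakeI0 {G : Type*} [AddCommGroup G] (u : ℕ → G) : ℕ → G :=
  fun m => match m with
  | 0 => u 0
  | Nat.succ k => u (2 * (k + 1)) + u (2 * (k + 1) - 1)

def snakeI1 {G : Type*} [AddCommGroup G] (u : ℕ → G) : ℕ → G :=
  fun m => u (2 * m) + u (2 * m + 1)

private def snakeAux {G : Type*} [AddCommGroup G] (v w : ℕ → G) : ℕ → G × G
  | 0 => (v 0, w 0 - v 0)
  | Nat.succ m => ((v (m + 1) - (snakeAux v w m).2),
      w (m + 1) - (v (m + 1) - (snakeAux v w m).2))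

/-- Joint surjectivity of `(i₀, i₁)` on the countable direct product. -/
theorem snake_joint_surjective {G : Type*} [AddCommGroup G] :
    Function.Surjective (fun u : ℕ → G => (snakeI0 u, snakeI1 u)) := by
  rintro ⟨v, w⟩
  refine ⟨fun n => if n % 2 = 0 then (snakeAux v w (n / 2)).1 else (snakeAux v w (n / 2)).2, ?_⟩
  have heven : ∀ m : ℕ, (2 * m) % 2 = 0 := fun m => by omega
  have hodd : ∀ m : ℕ, (2 * m + 1) % 2 = 1 := fun m => by omega
  simp only [Prod.mk.injEq]
  constructor
  · funext m
    match m with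
    | 0 => simp [snakeI0, snakeAux]
    | Nat.succ k =>
      have h1 : 2 * (k + 1) - 1 = 2 * k + 1 := by omega
      simp only [snakeI0, h1, heven, hodd]
      have h2 : 2 * (k + 1) / 2 = k + 1 := by omega
      have h3 : (2 * k + 1) / 2 = k := by omega
      simp only [h2, h3]
      norm_num [snakeAux]
  · funext m
    have h2 : 2 * m / 2 = m := by omega
    have h3 : (2 * m + 1) / 2 = m := by omega
    simp only [snakeI1, heven, hodd, h2, h3]
    match m with
    | 0 => simp [snakeAux]
    | Nat.succ k => norm_num [snakeAux]
end

section
/- Let G be an abelian group and define i₀, i₁ : (ℕ → G) → (ℕ → G) by i₀(u)(0) = u(0), i₀(u)(m) = u(2m) + u(2m-1) for m ≥ 1, and i₁(u)(m) = u(2m) + u(2m+1). Given v, w : ℕ → G, the explicit element u defined by u(2m) = (Σ_{k≤m} v(k)) − (Σ_{k<m} w(k)) and u(2m+1) = (Σ_{k≤m} w(k)) − (Σ_{k≤m} v(k)) satisfies i₀(u) = v and i₁(u) = w. -/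
/-- The explicit preimage: if `u (2m) = Σ_{k≤m} v k − Σ_{k<m} w k` and
`u (2m+1) = Σ_{k≤m} w k − Σ_{k≤m} v k`, then `i₀ u = v` and `i₁ u = w`. -/
theorem snake_explicit_preimage {G : Type*} [AddCommGroup G] (v w u : ℕ → G)
    (heven : ∀ m : ℕ, u (2 * m) =
      (∑ k ∈ Finset.range (m + 1), v k) - (∑ k ∈ Finset.range m, w k))
    (hodd : ∀ m : ℕ, u (2 * m + 1) =
      (∑ k ∈ Finset.range (m + 1), w k) - (∑ k ∈ Finset.range (m + 1), v k)) :
    snakeI0 u = v ∧ snakeI1 u = w := by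
  constructor
  · funext m
    cases m with
    | zero => simpa [snakeI0] using heven 0
    | succ k =>
      have h1 : 2 * (k + 1) - 1 = 2 * k + 1 := by omega
      simp only [snakeI0, h1, heven (k + 1), hodd k,
        Finset.sum_range_succ]
      abel
  · funext m
    simp only [snakeI1, heven m, hodd m, Finset.sum_range_succ]
    abel
end

section
/- Let G be a group and F = ⋆_{n∈ℕ} G the free product of countably many copies of G, with canonical injections ιₙ : G → F. Define homomorphisms i₀, i₁ : F → F' where F' = ⋆_{m∈ℕ} G with injections κₘ, by i₀(ι₀(u)) = κ₀(u), i₀(ι_{2m-1}(u)) = i₀(ι_{2m}(u)) = κₘ(u) for m ≥ 1, and i₁(ι_{2m}(u)) = i₁(ι_{2m+1}(u)) = κₘ(u) for m ≥ 0. Then in the pushout (amalgamated colimit) of i₀ and i₁ over F, every generator κₘ(u) of either copy of F' becomes equal (via the pushout maps j₀, j₁) to j₀(κ₀(u')) for a suitable u', and in fact the images of generators satisfy the relations j₀(κₘ(u)) = j₁(κₘ(u)) ... = j₀(κ_{m+1}(u)) for all m; consequently the pushout group is generated by {j₀(κ₀(u)) : u ∈ G}. -/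
open Monoid

/-- The free product of countably many copies of `G`. -/
abbrev SnakeF (G : Type*) [Group G] : Type _ := Monoid.CoprodI (fun _ : ℕ => G)

/-- The copy of `u ∈ G` in the `n`-th free factor. -/
def uIn {G : Type*} [Group G] (n : ℕ) (u : G) : SnakeF G :=
  Monoid.CoprodI.of (M := fun _ : ℕ => G) (i := n) u

/-- `i₀(ι₀ u) = κ₀ u`, `i₀(ι_{2m-1} u) = i₀(ι_{2m} u) = κₘ u` for `m ≥ 1`. -/
def snakeMap0 (G : Type*) [Group G] : SnakeF G →* SnakeF G :=
  Monoid.CoprodI.lift (fun n : ℕ =>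
    Monoid.CoprodI.of (M := fun _ : ℕ => G) (i := (n + 1) / 2))

/-- `i₁(ι_{2m} u) = i₁(ι_{2m+1} u) = κₘ u` for `m ≥ 0`. -/
def snakeMap1 (G : Type*) [Group G] : SnakeF G →* SnakeF G :=
  Monoid.CoprodI.lift (fun n : ℕ =>
    Monoid.CoprodI.of (M := fun _ : ℕ => G) (i := n / 2))

/-- The pushout diagram `F' ←i₀ F →i₁ F'` indexed by `Bool`. -/
def snakeφ (G : Type*) [Group G] : ∀ _ : Bool, SnakeF G →* SnakeF G :=
  fun b => if b then snakeMap0 G else snakeMap1 G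

/-! Each `x ∈ F` gives the relation `j₀(i₀ x) = j₁(i₁ x)`; on `ι_{2m}` and `ι_{2m+1}` these read
`j₀(κₘ u) = j₁(κₘ u)` and `j₁(κₘ u) = j₀(κ_{m+1} u)`, a zigzag through all generators of both
factors ending at `j₀(κ₀ u)`. Since the base maps into a factor, a pushout is generated by the
images of generators of its factors, hence by the `j₀(κ₀ u)`. -/

namespace Monoid.CoprodI

theorem closure_iUnion_range_of {ι : Type*} {M : ι → Type*} [∀ i, Group (M i)] :
    Subgroup.closure (⋃ i, Set.range (of : M i →* CoprodI M)) = ⊤ := by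
  rw [eq_top_iff, ← Subgroup.toSubmonoid_le, Subgroup.top_toSubmonoid, ← mclosure_iUnion_range_of]
  exact Submonoid.closure_le.mpr Subgroup.subset_closure

end Monoid.CoprodI

namespace Monoid.PushoutI

variable {ι : Type*} {G : ι → Type*} {H : Type*} [∀ i, Group (G i)] [Group H]
  {φ : ∀ i, H →* G i}

theorem iSup_range_of [Nonempty ι] : ⨆ i, (of (φ := φ) i).range = ⊤ := by
  rw [eq_top_iff]
  rintro x -
  induction x using induction_on with
  | of i g => exact Subgroup.mem_iSup_of_mem i ⟨g, rfl⟩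
  | base h =>
    obtain ⟨i⟩ := ‹Nonempty ι›
    exact Subgroup.mem_iSup_of_mem i ⟨φ i h, of_apply_eq_base φ i h⟩
  | mul x y hx hy => exact mul_mem hx hy

theorem closure_iUnion_image_of [Nonempty ι] {s : ∀ i, Set (G i)}
    (hs : ∀ i, Subgroup.closure (s i) = ⊤) :
    Subgroup.closure (⋃ i, of (φ := φ) i '' s i) = ⊤ := by
  simp_rw [Subgroup.closure_iUnion, ← MonoidHom.map_closure, hs, ← MonoidHom.range_eq_map]
  exact iSup_range_of

end Monoid.PushoutI

section Snake

variable {G : Type*} [Group G]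

local notation "j" => Monoid.PushoutI.of (φ := snakeφ G)

lemma snakeMap0_uIn (n : ℕ) (u : G) : snakeMap0 G (uIn n u) = uIn ((n + 1) / 2) u := by
  simp [snakeMap0, uIn]

lemma snakeMap1_uIn (n : ℕ) (u : G) : snakeMap1 G (uIn n u) = uIn (n / 2) u := by
  simp [snakeMap1, uIn]

lemma snake_of_true_uIn_eq_of_false (n : ℕ) (u : G) :
    j true (uIn ((n + 1) / 2) u) = j false (uIn (n / 2) u) := by
  have h₀ := Monoid.PushoutI.of_apply_eq_base (snakeφ G) true (uIn n u)
  have h₁ := Monoid.PushoutI.of_apply_eq_base (snakeφ G) false (uIn n u)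
  simp only [snakeφ, if_true, Bool.false_eq_true, if_false, snakeMap0_uIn, snakeMap1_uIn] at h₀ h₁
  rw [h₀, h₁]

lemma snake_of_true_eq_of_false (m : ℕ) (u : G) : j true (uIn m u) = j false (uIn m u) := by
  simpa [Nat.mul_add_div] using snake_of_true_uIn_eq_of_false (2 * m) u

lemma snake_of_false_eq_of_true_succ (m : ℕ) (u : G) :
    j false (uIn m u) = j true (uIn (m + 1) u) := by
  have h := snake_of_true_uIn_eq_of_false (2 * m + 1) u
  rw [show (2 * m + 1 + 1) / 2 = m + 1 by omega, show (2 * m + 1) / 2 = m by omega] at h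
  exact h.symm

lemma snake_of_true_eq_of_true_zero (m : ℕ) (u : G) : j true (uIn m u) = j true (uIn 0 u) := by
  induction m with
  | zero => rfl
  | succ m ih => rw [← snake_of_false_eq_of_true_succ, ← snake_of_true_eq_of_false, ih]

lemma snake_of_eq_of_true_zero (b : Bool) (m : ℕ) (u : G) :
    j b (uIn m u) = j true (uIn 0 u) := by
  cases b
  · rw [snake_of_false_eq_of_true_succ, snake_of_true_eq_of_true_zero]
  · exact snake_of_true_eq_of_true_zero m u

end Snake

/-- In the pushout of `i₀`, `i₁`, the images of generators satisfy
`j₀(κₘ u) = j₁(κₘ u) = j₀(κ_{m+1} u)`, each generator equals `j₀(κ₀ u)`, and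
the pushout is generated by `{j₀(κ₀ u) : u ∈ G}`. -/
theorem snake_pushout_generated {G : Type*} [Group G] :
    (∀ (m : ℕ) (u : G),
      Monoid.PushoutI.of (φ := snakeφ G) true (uIn m u) =
        Monoid.PushoutI.of (φ := snakeφ G) false (uIn m u) ∧
      Monoid.PushoutI.of (φ := snakeφ G) false (uIn m u) =
        Monoid.PushoutI.of (φ := snakeφ G) true (uIn (m + 1) u) ∧
      Monoid.PushoutI.of (φ := snakeφ G) true (uIn m u) =
        Monoid.PushoutI.of (φ := snakeφ G) true (uIn 0 u)) ∧
    Subgroup.closure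
      (Set.range (fun u : G => Monoid.PushoutI.of (φ := snakeφ G) true (uIn 0 u)))
      = ⊤ := by
  refine ⟨fun m u => ⟨snake_of_true_eq_of_false m u, snake_of_false_eq_of_true_succ m u,
    snake_of_true_eq_of_true_zero m u⟩, top_unique ?_⟩
  rw [← Monoid.PushoutI.closure_iUnion_image_of (φ := snakeφ G)
    fun _ => Monoid.CoprodI.closure_iUnion_range_of]
  exact Subgroup.closure_mono <| Set.iUnion_subset fun b => Set.image_subset_iff.mpr <|
    Set.iUnion_subset fun m => Set.range_subset_iff.mpr fun u =>
      ⟨u, (snake_of_eq_of_true_zero b m u).symm⟩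
end

section
/- Let G be an abelian group. Define Φ : (ℕ → G) → (ℕ → G) × (ℕ → G) by Φ(u) = (i₀(u), i₁(u)) with i₀(u)(0) = u(0), i₀(u)(m) = u(2m) + u(2m−1) (m ≥ 1), i₁(u)(m) = u(2m) + u(2m+1). Then Φ is a group isomorphism. -/
def snakeInv {G : Type*} [AddCommGroup G] (v w : ℕ → G) : ℕ → G := fun n =>
  if n % 2 = 0 then
    (∑ k ∈ Finset.range (n / 2 + 1), v k) - ∑ k ∈ Finset.range (n / 2), w k
  else
    (∑ k ∈ Finset.range (n / 2 + 1), w k) - ∑ k ∈ Finset.range (n / 2 + 1), v k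

lemma snakeInv_even {G : Type*} [AddCommGroup G] (v w : ℕ → G) (m : ℕ) :
    snakeInv v w (2 * m) =
      (∑ k ∈ Finset.range (m + 1), v k) - ∑ k ∈ Finset.range m, w k := by
  simp [snakeInv, Nat.mul_mod_right, Nat.mul_div_cancel_left _ (by norm_num : 0 < 2)]

lemma snakeInv_odd {G : Type*} [AddCommGroup G] (v w : ℕ → G) (m : ℕ) :
    snakeInv v w (2 * m + 1) =
      (∑ k ∈ Finset.range (m + 1), w k) - ∑ k ∈ Finset.range (m + 1), v k := by
  have h1 : (2 * m + 1) % 2 = 1 := by omega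
  have h2 : (2 * m + 1) / 2 = m := by omega
  simp [snakeInv, h1, h2]

lemma snake_inj {G : Type*} [AddCommGroup G] {u u' : ℕ → G}
    (h0 : snakeI0 u = snakeI0 u') (h1 : snakeI1 u = snakeI1 u') : u = u' := by
  have key : ∀ m : ℕ, u (2 * m) = u' (2 * m) ∧ u (2 * m + 1) = u' (2 * m + 1) := by
    intro m
    induction m with
    | zero =>
      have e0 : u 0 = u' 0 := congrFun h0 0
      have e1 : u 0 + u 1 = u' 0 + u' 1 := congrFun h1 0
      constructor
      · simpa using e0
      · have : u 1 = u' 1 := by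
          have := e1; rw [e0] at this; exact add_left_cancel this
        simpa using this
    | succ m ih =>
      have e0 : u (2 * (m + 1)) + u (2 * (m + 1) - 1) =
          u' (2 * (m + 1)) + u' (2 * (m + 1) - 1) := congrFun h0 (m + 1)
      have hsub : 2 * (m + 1) - 1 = 2 * m + 1 := by omega
      rw [hsub] at e0
      have heven : u (2 * (m + 1)) = u' (2 * (m + 1)) := by
        have := e0; rw [ih.2] at this; exact add_right_cancel this
      refine ⟨heven, ?_⟩
      have e1 : u (2 * (m + 1)) + u (2 * (m + 1) + 1) =
          u' (2 * (m + 1)) + u' (2 * (m + 1) + 1) := congrFun h1 (m + 1)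
      rw [heven] at e1
      exact add_left_cancel e1
  funext n
  rcases Nat.even_or_odd n with ⟨m, hm⟩ | ⟨m, hm⟩
  · have := (key m).1; rwa [show 2 * m = n by omega] at this
  · have := (key m).2; rwa [show 2 * m + 1 = n by omega] at this

/-- `Φ(u) = (i₀ u, i₁ u)` is a group isomorphism `∏_ℕ G ≅ (∏_ℕ G) × (∏_ℕ G)`. -/
theorem snake_Phi_isomorphism {G : Type*} [AddCommGroup G] :
    Function.Bijective (fun u : ℕ → G => (snakeI0 u, snakeI1 u)) ∧
    (∀ u v : ℕ → G,
      (snakeI0 (u + v), snakeI1 (u + v)) =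
        (snakeI0 u, snakeI1 u) + (snakeI0 v, snakeI1 v)) := by
  constructor
  · constructor
    · intro u u' h
      exact snake_inj (congrArg Prod.fst h) (congrArg Prod.snd h)
    · rintro ⟨v, w⟩
      refine ⟨snakeInv v w, ?_⟩
      simp only [Prod.mk.injEq]
      constructor
      · funext m
        match m with
        | 0 => simp [snakeI0, snakeInv]
        | Nat.succ k =>
          show snakeInv v w (2 * (k + 1)) + snakeInv v w (2 * (k + 1) - 1) = v (k + 1)
          rw [show 2 * (k + 1) - 1 = 2 * k + 1 by omega, snakeInv_even, snakeInv_odd,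
            Finset.sum_range_succ v (k + 1)]
          abel
      · funext m
        show snakeInv v w (2 * m) + snakeInv v w (2 * m + 1) = w m
        rw [snakeInv_even, snakeInv_odd, Finset.sum_range_succ w m]
        abel
  · intro u v
    simp only [Prod.mk.injEq, Prod.mk_add_mk]
    constructor
    · funext m
      match m with
      | 0 => simp [snakeI0]
      | Nat.succ k => simp [snakeI0]; abel
    · funext m
      simp [snakeI1]; abel
end

section
/- Let G be a group and F = ⋆_{n ∈ ℕ} G, with the n-th free factor written u_n. Define homomorphisms p : F → ⋆_{m∈ℕ} G by collapsing pairs, p(u_{2m}) = p(u_{2m+1}) = v_m, and q : F → ⋆_{m∈ℕ} G by q(u_{2m+1}) = q(u_{2m+2}) = w_m and q(u_0) = e (trivial). Then for any finite word W in F, letting W₀ be W with all odd-indexed letters deleted, there is W* ∈ F (obtained by inserting finite telescoping words) with p(W*) = p(W) and q(W*) = q(W₀). -/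
open Monoid

/-- `p` identifies factors `2m` and `2m+1`: `p(u_{2m}) = p(u_{2m+1}) = v_m`. -/
def snakeP (G : Type*) [Group G] : SnakeF G →* SnakeF G :=
  Monoid.CoprodI.lift (fun n : ℕ =>
    Monoid.CoprodI.of (M := fun _ : ℕ => G) (i := n / 2))

/-- `q` kills factor `0` and identifies factors `2m+1` and `2m+2`:
`q(u₀) = e`, `q(u_{2m+1}) = q(u_{2m+2}) = w_m`. -/
def snakeQ (G : Type*) [Group G] : SnakeF G →* SnakeF G :=
  Monoid.CoprodI.lift (fun n : ℕ =>
    if n = 0 then 1 else Monoid.CoprodI.of (M := fun _ : ℕ => G) (i := (n - 1) / 2))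

/-- The homomorphism deleting all letters from odd-indexed factors. -/
def snakeDel (G : Type*) [Group G] : SnakeF G →* SnakeF G :=
  Monoid.CoprodI.lift (fun n : ℕ =>
    if Even n then (Monoid.CoprodI.of (M := fun _ : ℕ => G) (i := n)) else 1)

/-- Finite telescoping element attached to an odd letter. -/
def snakeE {G : Type*} [Group G] : ℕ → G → SnakeF G
  | 0, x => Monoid.CoprodI.of (M := fun _ : ℕ => G) (i := 0) x
  | m + 1, x =>
      Monoid.CoprodI.of (M := fun _ : ℕ => G) (i := 2 * m + 2) x *
        (Monoid.CoprodI.of (M := fun _ : ℕ => G) (i := 2 * m + 1) x)⁻¹ *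
        snakeE m x

lemma snakeP_E {G : Type*} [Group G] (m : ℕ) (x : G) :
    snakeP G (snakeE m x) = Monoid.CoprodI.of (M := fun _ : ℕ => G) (i := m) x := by
  induction m with
  | zero => simp [snakeE, snakeP]
  | succ m ih =>
      have h1 : (2 * m + 2) / 2 = m + 1 := by omega
      have h2 : (2 * m + 1) / 2 = m := by omega
      simp [snakeE, snakeP, map_mul, map_inv, h1, h2, ih]
      simp only [snakeP] at ih
      rw [ih]
      group

lemma snakeQ_E {G : Type*} [Group G] (m : ℕ) (x : G) :
    snakeQ G (snakeE m x) = 1 := by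
  induction m with
  | zero => simp [snakeE, snakeQ]
  | succ m ih =>
      have h1 : (2 * m + 2 - 1) / 2 = m := by omega
      have h2 : (2 * m + 1 - 1) / 2 = m := by omega
      have h3 : (2 * m + 1) / 2 = m := by omega
      have h4 : (2 * m) / 2 = m := by omega
      simp [snakeE, snakeQ, map_mul, map_inv, h1, h2, h3, h4]
      simp only [snakeQ] at ih
      rw [ih]

/-- Combinatorial heart of the simple-connectivity proof of `SC(Z)`, for finite
words: for any word `W` there is a word `W*` (obtained by inserting finite
telescoping words) with `p(W*) = p(W)` and `q(W*) = q(W₀)`, where `W₀` is `W`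
with its odd-indexed letters deleted. -/
theorem snake_insert_telescoping {G : Type*} [Group G] :
    ∀ W : SnakeF G, ∃ Wstar : SnakeF G,
      snakeP G Wstar = snakeP G W ∧ snakeQ G Wstar = snakeQ G (snakeDel G W) := by
  intro W
  induction W using Monoid.CoprodI.induction_on with
  | one => exact ⟨1, by simp, by simp⟩
  | of n x =>
      rcases Nat.even_or_odd n with he | ho
      · exact ⟨Monoid.CoprodI.of x, rfl, by simp [snakeDel, he]⟩
      · obtain ⟨m, rfl⟩ := ho
        refine ⟨snakeE m x, ?_, ?_⟩
        · rw [snakeP_E]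
          have h : (2 * m + 1) / 2 = m := by omega
          simp [snakeP, h]
        · rw [snakeQ_E]
          have : ¬ Even (2 * m + 1) := by simp [Nat.even_add_one, Nat.even_mul]
          simp [snakeDel, this]
  | mul x y hx hy =>
      obtain ⟨a, ha1, ha2⟩ := hx
      obtain ⟨b, hb1, hb2⟩ := hy
      exact ⟨a * b, by simp [ha1, hb1], by simp [ha2, hb2]⟩
end
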